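/- Counterexample for odd alphabets: let p ≥ 2 and r = 2p − 1. Then f_{p+1,r}^{{a}} = 3, whereas the Charleston–Steel recursion f_{k,r} = 2·f_{k-p,r} with f_{1,r} = 2 would predict the value 4. In particular, for r = 3 one has f_{3,3}^{{a}} = 3 ≠ 4 = 2·f_{1,3}^{{a}}. -/

import Mathlib

open Finset

/-- Fitch's parsimony operation: intersection if nonempty, otherwise union. -/
def fitchOp {α : Type*} [DecidableEq α] (B C : Finset α) : Finset α :=
  if (B ∩ C).Nonempty then B ∩ C else B ∪ C

/-- `fCS a R k A` is `f_{k,r}^A`: the minimum number of leaves of the fully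
bifurcating tree `T_k` that must be assigned state `a` in order for the Fitch
root state set to equal `A`, defined by the standard-decomposition recursion,
with base case `f_{0,r}^{{x}} = 1` if `x = a` and `0` otherwise. -/
noncomputable def fCS {α : Type*} [DecidableEq α] (a : α) (R : Finset α) :
    ℕ → Finset α → ℕ
  | 0, A => if a ∈ A then 1 else 0
  | (k+1), A => sInf {n : ℕ | ∃ B C : Finset α, B ⊆ R ∧ C ⊆ R ∧
      B.Nonempty ∧ C.Nonempty ∧ B.card ≤ 2 ^ k ∧ C.card ≤ 2 ^ k ∧
      fitchOp B C = A ∧ n = fCS a R k B + fCS a R k C}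

section Aux

variable {α : Type*} [DecidableEq α] (a : α) (R : Finset α)

lemma fCS_zero (A : Finset α) : fCS a R 0 A = if a ∈ A then 1 else 0 := rfl

lemma fCS_succ (k : ℕ) (A : Finset α) : fCS a R (k+1) A =
    sInf {n : ℕ | ∃ B C : Finset α, B ⊆ R ∧ C ⊆ R ∧
      B.Nonempty ∧ C.Nonempty ∧ B.card ≤ 2 ^ k ∧ C.card ≤ 2 ^ k ∧
      fitchOp B C = A ∧ n = fCS a R k B + fCS a R k C} := rfl

lemma fitchOp_subset_union {B C : Finset α} : fitchOp B C ⊆ B ∪ C := by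
  unfold fitchOp
  split
  · exact (inter_subset_left).trans subset_union_left
  · exact subset_rfl

lemma fitchOp_self (B : Finset α) (hB : B.Nonempty) : fitchOp B B = B := by
  unfold fitchOp
  rw [inter_self]
  simp [hB]

/-- Any nonempty set of card ≤ 2^(k+1) admits a decomposition into two pieces of
card ≤ 2^k. -/
lemma exists_decomp (k : ℕ) (B : Finset α) (hB : B.Nonempty)
    (hcard : B.card ≤ 2 ^ (k+1)) :
    ∃ B1 C1 : Finset α, B1 ⊆ B ∧ C1 ⊆ B ∧ B1.Nonempty ∧ C1.Nonempty ∧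
      B1.card ≤ 2 ^ k ∧ C1.card ≤ 2 ^ k ∧ fitchOp B1 C1 = B := by
  rcases eq_or_lt_of_le (Finset.one_le_card.mpr hB) with h1 | h2
  · refine ⟨B, B, subset_rfl, subset_rfl, hB, hB, ?_, ?_, fitchOp_self B hB⟩ <;>
    · rw [← h1]; exact Nat.one_le_two_pow
  · obtain ⟨C1, hC1B, hC1card⟩ := Finset.exists_subset_card_eq
      (show B.card / 2 ≤ B.card from Nat.div_le_self _ _)
    have hpow : (0:ℕ) < 2 ^ k := Nat.pow_pos (by norm_num)
    have h2p : (2:ℕ) ^ (k+1) = 2 * 2 ^ k := by ring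
    refine ⟨B \ C1, C1, sdiff_subset, hC1B, ?_, ?_, ?_, ?_, ?_⟩
    · rw [← Finset.card_pos, card_sdiff_of_subset hC1B, hC1card]; omega
    · rw [← Finset.card_pos, hC1card]; omega
    · rw [card_sdiff_of_subset hC1B, hC1card]; omega
    · rw [hC1card]; omega
    · unfold fitchOp
      rw [sdiff_inter_self]
      simp [Finset.sdiff_union_of_subset hC1B]

lemma fCS_pos (k : ℕ) : ∀ B : Finset α, B ⊆ R → a ∈ B → B.card ≤ 2 ^ k →
    1 ≤ fCS a R k B := by
  induction k with
  | zero => intro B _ haB _; rw [fCS_zero]; simp [haB]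
  | succ k ih =>
    intro B hBR haB hc
    by_contra hcon
    have h0 : fCS a R (k+1) B = 0 := by omega
    obtain ⟨B1, C1, hB1B, hC1B, hB1ne, hC1ne, hB1c, hC1c, hfi⟩ :=
      exists_decomp k B ⟨a, haB⟩ hc
    have hSne : {n : ℕ | ∃ B' C' : Finset α, B' ⊆ R ∧ C' ⊆ R ∧
        B'.Nonempty ∧ C'.Nonempty ∧ B'.card ≤ 2 ^ k ∧ C'.card ≤ 2 ^ k ∧
        fitchOp B' C' = B ∧ n = fCS a R k B' + fCS a R k C'}.Nonempty :=
      ⟨_, B1, C1, hB1B.trans hBR, hC1B.trans hBR, hB1ne, hC1ne, hB1c, hC1c, hfi, rfl⟩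
    have hmem := Nat.sInf_mem hSne
    rw [← fCS_succ, h0] at hmem
    obtain ⟨B', C', hB'R, hC'R, hB'ne, hC'ne, hB'c, hC'c, hfi', heq⟩ := hmem
    have hB'0 : fCS a R k B' = 0 := by omega
    have hC'0 : fCS a R k C' = 0 := by omega
    have haB' : a ∉ B' := fun h => by have := ih B' hB'R h hB'c; omega
    have haC' : a ∉ C' := fun h => by have := ih C' hC'R h hC'c; omega
    have : a ∈ B' ∪ C' := fitchOp_subset_union (hfi' ▸ haB)
    rw [mem_union] at this
    tauto

lemma fCS_zero_of_not_mem (k : ℕ) : ∀ B : Finset α, B ⊆ R → B.Nonempty →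
    a ∉ B → B.card ≤ 2 ^ k → fCS a R k B = 0 := by
  induction k with
  | zero => intro B _ _ haB _; rw [fCS_zero]; simp [haB]
  | succ k ih =>
    intro B hBR hBne haB hc
    obtain ⟨B1, C1, hB1B, hC1B, hB1ne, hC1ne, hB1c, hC1c, hfi⟩ :=
      exists_decomp k B hBne (hc.trans (Nat.pow_le_pow_right (by norm_num) (by omega)))
    have h1 : fCS a R k B1 = 0 :=
      ih B1 (hB1B.trans hBR) hB1ne (fun h => haB (hB1B h)) hB1c
    have h2 : fCS a R k C1 = 0 :=
      ih C1 (hC1B.trans hBR) hC1ne (fun h => haB (hC1B h)) hC1c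
    have hle : fCS a R (k+1) B ≤ 0 := by
      rw [fCS_succ]
      refine Nat.sInf_le ⟨B1, C1, hB1B.trans hBR, hC1B.trans hBR, hB1ne, hC1ne,
        hB1c, hC1c, hfi, ?_⟩
      omega
    omega

/-- A root set containing `a` realizable with a single `a`-leaf at level `k`
has at least `k+1` elements. -/
lemma card_ge_of_fCS_le_one (k : ℕ) : ∀ B : Finset α, B ⊆ R → a ∈ B →
    B.card ≤ 2 ^ k → fCS a R k B ≤ 1 → k + 1 ≤ B.card := by
  induction k with
  | zero => intro B _ haB _ _; exact Finset.one_le_card.mpr ⟨a, haB⟩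
  | succ k ih =>
    intro B hBR haB hc h1
    obtain ⟨B1, C1, hB1B, hC1B, hB1ne, hC1ne, hB1c, hC1c, hfi⟩ :=
      exists_decomp k B ⟨a, haB⟩ hc
    have hSne : {n : ℕ | ∃ B' C' : Finset α, B' ⊆ R ∧ C' ⊆ R ∧
        B'.Nonempty ∧ C'.Nonempty ∧ B'.card ≤ 2 ^ k ∧ C'.card ≤ 2 ^ k ∧
        fitchOp B' C' = B ∧ n = fCS a R k B' + fCS a R k C'}.Nonempty :=
      ⟨_, B1, C1, hB1B.trans hBR, hC1B.trans hBR, hB1ne, hC1ne, hB1c, hC1c, hfi, rfl⟩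
    have hmem := Nat.sInf_mem hSne
    rw [← fCS_succ] at hmem
    obtain ⟨B', C', hB'R, hC'R, hB'ne, hC'ne, hB'c, hC'c, hfi', heq⟩ := hmem
    have hpos := fCS_pos a R (k+1) B hBR haB hc
    have hsum : fCS a R k B' + fCS a R k C' = 1 := by omega
    -- one part has value 1, the other 0
    have key : ∀ X Y : Finset α, X ⊆ R → Y ⊆ R → X.Nonempty → Y.Nonempty →
        X.card ≤ 2 ^ k → Y.card ≤ 2 ^ k → fitchOp X Y = B →
        fCS a R k X = 1 → fCS a R k Y = 0 → k + 2 ≤ B.card := by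
      intro X Y hXR hYR hXne hYne hXc hYc hfiXY hX1 hY0
      have haY : a ∉ Y := fun h => by have := fCS_pos a R k Y hYR h hYc; omega
      have hint : ¬ (X ∩ Y).Nonempty := by
        intro hne
        have : B = X ∩ Y := by rw [← hfiXY]; unfold fitchOp; simp [hne]
        exact haY (Finset.mem_of_mem_inter_right (this ▸ haB))
      have hBun : B = X ∪ Y := by rw [← hfiXY]; unfold fitchOp; simp [hint]
      have haX : a ∈ X := by
        have := hBun ▸ haB; rw [mem_union] at this; tauto
      have hXcard := ih X hXR haX hXc (le_of_eq hX1)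
      have hdisj : Disjoint X Y := by
        rw [Finset.disjoint_iff_inter_eq_empty, ← Finset.not_nonempty_iff_eq_empty]
        exact hint
      have : B.card = X.card + Y.card := by
        rw [hBun, Finset.card_union_of_disjoint hdisj]
      have hY1 : 1 ≤ Y.card := Finset.one_le_card.mpr hYne
      omega
    rcases (by omega : fCS a R k B' = 1 ∧ fCS a R k C' = 0 ∨
        fCS a R k B' = 0 ∧ fCS a R k C' = 1) with ⟨h1', h0'⟩ | ⟨h0', h1'⟩
    · exact key B' C' hB'R hC'R hB'ne hC'ne hB'c hC'c hfi' h1' h0'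
    · refine key C' B' hC'R hB'R hC'ne hB'ne hC'c hB'c ?_ h1' h0'
      rw [← hfi']; unfold fitchOp; rw [inter_comm, union_comm]
    
/-- Every set containing `a` of cardinality `k+1` is realizable with one
`a`-leaf at level `k`. -/
lemma fCS_le_one (k : ℕ) : ∀ B : Finset α, B ⊆ R → a ∈ B → B.card = k + 1 →
    fCS a R k B ≤ 1 := by
  induction k with
  | zero => intro B _ haB _; rw [fCS_zero]; simp [haB]
  | succ k ih =>
    intro B hBR haB hcard
    have herase : (B.erase a).Nonempty := by
      rw [← Finset.card_pos, card_erase_of_mem haB]; omega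
    obtain ⟨x, hx⟩ := herase
    have hxa : x ≠ a := Finset.ne_of_mem_erase hx
    have hxB : x ∈ B := Finset.mem_of_mem_erase hx
    set B1 := B.erase x with hB1def
    have haB1 : a ∈ B1 := Finset.mem_erase.mpr ⟨fun h => hxa h.symm, haB⟩
    have hB1card : B1.card = k + 1 := by
      rw [hB1def, card_erase_of_mem hxB]; omega
    have hklt : k + 1 ≤ 2 ^ k := Nat.lt_two_pow_self (n := k)
    have hfi : fitchOp B1 {x} = B := by
      unfold fitchOp
      have hint : B1 ∩ {x} = ∅ := by
        rw [Finset.inter_singleton_of_notMem (Finset.notMem_erase x B)]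
      rw [hint]
      simp only [Finset.not_nonempty_empty, if_false]
      rw [Finset.union_comm, ← Finset.insert_eq, Finset.insert_erase hxB]
    have hx0 : fCS a R k {x} = 0 := by
      refine fCS_zero_of_not_mem a R k {x} ?_ ⟨x, mem_singleton_self x⟩ ?_ ?_
      · simpa using hBR hxB
      · simp only [Finset.mem_singleton]; exact fun h => hxa h.symm
      · simp; exact Nat.one_le_two_pow
    have hB1le := ih B1 ((erase_subset x B).trans hBR) haB1 hB1card
    have hle : fCS a R (k+1) B ≤ fCS a R k B1 + fCS a R k {x} := by
      rw [fCS_succ]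
      exact Nat.sInf_le ⟨B1, {x}, (erase_subset x B).trans hBR,
        (by simpa using hBR hxB), ⟨a, haB1⟩, ⟨x, mem_singleton_self x⟩,
        by omega, by simp; exact Nat.one_le_two_pow, hfi, rfl⟩
    omega

end Aux

lemma fCS_singleton_le_two {α : Type*} [DecidableEq α] (a : α) (R : Finset α)
    (haR : a ∈ R) (p : ℕ) (hp : 2 ≤ p) (hR : R.card = 2 * p - 1) (j : ℕ)
    (hj : j + 2 ≤ p) : fCS a R (j+2) {a} ≤ 2 := by
  have hcardE : (R.erase a).card = 2*p - 2 := by rw [card_erase_of_mem haR]; omega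
  obtain ⟨D, hDsub, hDcard⟩ := Finset.exists_subset_card_eq (s := R.erase a)
    (n := 2*(j+1)) (by omega)
  obtain ⟨D1, hD1D, hD1card⟩ := Finset.exists_subset_card_eq (s := D) (n := j+1)
    (by omega)
  set D2 := D \ D1 with hD2def
  have hD2card : D2.card = j+1 := by rw [hD2def, card_sdiff_of_subset hD1D]; omega
  have haD : a ∉ D := fun h => (Finset.notMem_erase a R) (hDsub h)
  set B := insert a D1 with hBdef
  set C := insert a D2 with hCdef
  have hBR : B ⊆ R := Finset.insert_subset haR
    ((hD1D.trans hDsub).trans (erase_subset a R))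
  have hCR : C ⊆ R := Finset.insert_subset haR
    (((sdiff_subset).trans hDsub).trans (erase_subset a R))
  have haD1 : a ∉ D1 := fun h => haD (hD1D h)
  have haD2 : a ∉ D2 := fun h => haD ((sdiff_subset) h)
  have hBcard : B.card = j + 2 := by rw [hBdef, card_insert_of_notMem haD1, hD1card]
  have hCcard : C.card = j + 2 := by rw [hCdef, card_insert_of_notMem haD2, hD2card]
  have hBC : B ∩ C = {a} := by
    ext x
    simp only [mem_inter, hBdef, hCdef, mem_insert, mem_singleton]
    constructor
    · rintro ⟨h1, h2⟩
      rcases h1 with rfl | h1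
      · rfl
      rcases h2 with rfl | h2
      · rfl
      · exact absurd h1 (Finset.mem_sdiff.mp h2).2
    · rintro rfl; exact ⟨Or.inl rfl, Or.inl rfl⟩
  have hfi : fitchOp B C = ({a} : Finset α) := by
    unfold fitchOp
    rw [hBC]
    simp
  have hpow : j + 2 ≤ 2 ^ (j+1) := Nat.lt_two_pow_self (n := j+1)
  have hB1 : fCS a R (j+1) B ≤ 1 :=
    fCS_le_one a R (j+1) B hBR (mem_insert_self a D1) hBcard
  have hC1 : fCS a R (j+1) C ≤ 1 :=
    fCS_le_one a R (j+1) C hCR (mem_insert_self a D2) hCcard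
  have hle : fCS a R (j+2) {a} ≤ fCS a R (j+1) B + fCS a R (j+1) C := by
    rw [fCS_succ]
    exact Nat.sInf_le ⟨B, C, hBR, hCR, ⟨a, mem_insert_self a D1⟩,
      ⟨a, mem_insert_self a D2⟩, by omega, by omega, hfi, rfl⟩
  omega

/-- counterexample for odd alphabets: for r = 2p - 1, p ≥ 2,
f_{p+1,r}^{{a}} = 3, whereas the Charleston–Steel recursion would predict
2·f_{1,r} = 4. -/
theorem stmt_10 {α : Type*} [DecidableEq α] (a : α) (R : Finset α)
    (haR : a ∈ R) (p : ℕ) (hp : 2 ≤ p) (hR : R.card = 2 * p - 1) :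
    fCS a R (p + 1) {a} = 3 ∧ 2 * fCS a R 1 {a} = 4 := by
  have haS : ({a} : Finset α) ⊆ R := Finset.singleton_subset_iff.mpr haR
  have hf0 : fCS a R 0 {a} = 1 := by rw [fCS_zero]; simp
  have hfone : fCS a R 1 {a} = 2 := by
    have hub : fCS a R 1 {a} ≤ 2 := by
      rw [fCS_succ]
      refine le_trans (Nat.sInf_le ⟨{a}, {a}, haS, haS, ⟨a, mem_singleton_self a⟩,
        ⟨a, mem_singleton_self a⟩, by simp, by simp,
        fitchOp_self {a} ⟨a, mem_singleton_self a⟩, rfl⟩) ?_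
      rw [hf0]
    have hlb : ¬ fCS a R 1 {a} ≤ 1 := by
      intro h
      have := card_ge_of_fCS_le_one a R 1 {a} haS (mem_singleton_self a)
        (by simp) h
      simp at this
    omega
  refine ⟨?_, by omega⟩
  -- construct the witness decomposition for level p+1
  have hcardE : (R.erase a).card = 2*p - 2 := by rw [card_erase_of_mem haR]; omega
  obtain ⟨D, hDsub, hDcard⟩ := Finset.exists_subset_card_eq (s := R.erase a)
    (n := p) (by omega)
  have haD : a ∉ D := fun h => (Finset.notMem_erase a R) (hDsub h)
  set B := insert a D with hBdef
  have hBR : B ⊆ R := Finset.insert_subset haR (hDsub.trans (erase_subset a R))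
  have hBcard : B.card = p + 1 := by rw [hBdef, card_insert_of_notMem haD, hDcard]
  have hfi : fitchOp B {a} = ({a} : Finset α) := by
    unfold fitchOp
    rw [Finset.inter_singleton_of_mem (mem_insert_self a D)]
    simp
  have hpow : p + 1 ≤ 2 ^ p := Nat.lt_two_pow_self (n := p)
  have hone : (1:ℕ) ≤ 2 ^ p := Nat.one_le_two_pow
  have hBle : fCS a R p B ≤ 1 :=
    fCS_le_one a R p B hBR (mem_insert_self a D) hBcard
  have hale : fCS a R p {a} ≤ 2 := by
    have := fCS_singleton_le_two a R haR p hp hR (p-2) (by omega)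
    rwa [show p - 2 + 2 = p from by omega] at this
  have hub : fCS a R (p+1) {a} ≤ 3 := by
    rw [fCS_succ]
    refine le_trans (Nat.sInf_le ⟨B, {a}, hBR, haS, ⟨a, mem_insert_self a D⟩,
      ⟨a, mem_singleton_self a⟩, by omega, by rw [card_singleton]; omega, hfi, rfl⟩) ?_
    omega
  have hSne : {n : ℕ | ∃ B' C' : Finset α, B' ⊆ R ∧ C' ⊆ R ∧
      B'.Nonempty ∧ C'.Nonempty ∧ B'.card ≤ 2 ^ p ∧ C'.card ≤ 2 ^ p ∧
      fitchOp B' C' = ({a} : Finset α) ∧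
      n = fCS a R p B' + fCS a R p C'}.Nonempty :=
    ⟨_, B, {a}, hBR, haS, ⟨a, mem_insert_self a D⟩, ⟨a, mem_singleton_self a⟩,
      by omega, by rw [card_singleton]; omega, hfi, rfl⟩
  have hmem := Nat.sInf_mem hSne
  rw [← fCS_succ] at hmem
  obtain ⟨B', C', hB'R, hC'R, hB'ne, hC'ne, hB'c, hC'c, hfi', heq⟩ := hmem
  have hlb : 3 ≤ fCS a R (p+1) {a} := by
    by_cases hne : (B' ∩ C').Nonempty
    · have hBC : B' ∩ C' = {a} := by
        rw [← hfi']; unfold fitchOp; rw [if_pos hne]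
      have haB' : a ∈ B' := Finset.mem_of_mem_inter_left
        (hBC ▸ mem_singleton_self a)
      have haC' : a ∈ C' := Finset.mem_of_mem_inter_right
        (hBC ▸ mem_singleton_self a)
      have h1 := fCS_pos a R p B' hB'R haB' hB'c
      have h2 := fCS_pos a R p C' hC'R haC' hC'c
      by_contra hcon
      have hB'1 : fCS a R p B' ≤ 1 := by omega
      have hC'1 : fCS a R p C' ≤ 1 := by omega
      have hcB := card_ge_of_fCS_le_one a R p B' hB'R haB' hB'c hB'1
      have hcC := card_ge_of_fCS_le_one a R p C' hC'R haC' hC'c hC'1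
      have hcup : (B' ∪ C').card ≤ 2*p - 1 := by
        rw [← hR]; exact Finset.card_le_card (Finset.union_subset hB'R hC'R)
      have hint : (B' ∩ C').card = 1 := by rw [hBC]; exact card_singleton a
      have := Finset.card_inter_add_card_union B' C'
      omega
    · exfalso
      have hBun : B' ∪ C' = ({a} : Finset α) := by
        rw [← hfi']; unfold fitchOp; rw [if_neg hne]
      have hB'a : B' = {a} := by
        rcases Finset.subset_singleton_iff.mp
          (hBun ▸ Finset.subset_union_left (s₂ := C')) with h | h
        · exact absurd h (Finset.nonempty_iff_ne_empty.mp hB'ne)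
        · exact h
      have hC'a : C' = {a} := by
        rcases Finset.subset_singleton_iff.mp
          (hBun ▸ Finset.subset_union_right (s₁ := B')) with h | h
        · exact absurd h (Finset.nonempty_iff_ne_empty.mp hC'ne)
        · exact h
      exact hne (by rw [hB'a, hC'a, inter_self]; exact ⟨a, mem_singleton_self a⟩)
  omega
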